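/- arXiv:1908.06823 — 2 statements merged into one kernel-verified Lean document; each statement's English description precedes it below -/
import Mathlib

section
/- If F is a free product of cyclic groups (each free factor finite cyclic or infinite cyclic), then the second integral group homology H₂(F;ℤ) with trivial coefficients is trivial. -/
/-- The free product `⟨f₁⟩ ∗ ⋯ ∗ ⟨f_d⟩` of cyclic groups, the `i`-th factor being cyclic of
order `m i` (with `m i = 0` corresponding to an infinite cyclic factor, since `ZMod 0 = ℤ`). -/
abbrev FreeProdCyclic {ι : Type*} (m : ι → ℕ) : Type _ :=
  Monoid.CoprodI (fun i : ι => Multiplicative (ZMod (m i)))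

/-- The distinguished generator `fᵢ` of the `i`-th cyclic free factor. -/
def cyclicGen {ι : Type*} (m : ι → ℕ) (i : ι) : FreeProdCyclic m :=
  Monoid.CoprodI.of (Multiplicative.ofAdd (1 : ZMod (m i)))

/-- The quotient `([F,F] ⊓ R) / [R,F]` appearing in the Hopf formula. -/
abbrev hopfQuotient {F : Type*} [Group F] (R : Subgroup F) : Type _ :=
  ↥(⁅(⊤ : Subgroup F), (⊤ : Subgroup F)⁆ ⊓ R) ⧸
    ((⁅R, (⊤ : Subgroup F)⁆).subgroupOf (⁅(⊤ : Subgroup F), (⊤ : Subgroup F)⁆ ⊓ R))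

instance hopfQuotient_normal {F : Type*} [Group F] (R : Subgroup F) [R.Normal] :
    ((⁅R, (⊤ : Subgroup F)⁆).subgroupOf
      (⁅(⊤ : Subgroup F), (⊤ : Subgroup F)⁆ ⊓ R)).Normal :=
  Subgroup.Normal.subgroupOf inferInstance _

/-- The second integral homology `H₂(G;ℤ)` of a group `G`, realized via the Hopf formula
`H₂(G;ℤ) ≅ ([F,F] ⊓ R)/[R,F]` applied to the canonical presentation `1 → R → F → G → 1`
of `G` by the free group `F` on the underlying set of `G` (with projection `F → G`
induced by the identity map, whose kernel is `R`). -/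
abbrev H2Z (G : Type*) [Group G] : Type _ :=
  hopfQuotient (MonoidHom.ker (FreeGroup.lift (id : G → G)))

/-
Hopf's formula computes H₂(G; ℤ) as ([F, F] ⊓ R) / [R, F] for a free presentation G = F / R, and
whether this quotient vanishes does not depend on the presentation: lifts of the identity of G in
both directions between two free presentations carry one inclusion [F, F] ⊓ R ≤ [R, F] to the
other, because two lifts agree modulo [R, F] on commutators. So it suffices to treat the
presentation ⟨xᵢ | xᵢ ^ mᵢ⟩ of the free product. Modulo [R, F] the relators are central, so every
element of R is congruent to a product ∏ (xᵢ ^ mᵢ) ^ aᵢ. If it also lies in [F, F], its image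
(mᵢ aᵢ)ᵢ in the abelianization ℤ^ι vanishes, so each factor is already trivial in F.
-/

open Subgroup
open scoped commutatorElement

section

variable {F G : Type*} [Group F] [Group G]

lemma QuotientGroup.mk_mem_center_of_mem {R : Subgroup F} [R.Normal] {r : F} (hr : r ∈ R) :
    (r : F ⧸ ⁅R, (⊤ : Subgroup F)⁆) ∈ center (F ⧸ ⁅R, (⊤ : Subgroup F)⁆) := by
  rw [mem_center_iff]
  intro g
  induction g using QuotientGroup.induction_on with | H g => ?_
  rw [← QuotientGroup.mk_mul, ← QuotientGroup.mk_mul, QuotientGroup.eq]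
  convert commutator_mem_commutator (inv_mem hr) (mem_top g⁻¹) using 1
  group

lemma commutatorElement_mul_mul_of_mem_center {z w : G} (hz : z ∈ center G) (hw : w ∈ center G)
    (u v : G) : ⁅z * u, w * v⁆ = ⁅u, v⁆ := by
  rw [mem_center_iff] at hz hw
  calc ⁅z * u, w * v⁆ = z * (u * w * v * u⁻¹) * z⁻¹ * v⁻¹ * w⁻¹ := by group
    _ = u * w * (v * u⁻¹ * v⁻¹) * w⁻¹ := by rw [← hz]; group
    _ = w * ⁅u, v⁆ * w⁻¹ := by rw [hw u, commutatorElement_def]; group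
    _ = ⁅u, v⁆ := by rw [← hw]; group

lemma commutator_le_eqLocus_of_mul_inv_mem_center {A : Type*} [Group A] (f g : A →* G)
    (h : ∀ a, f a * (g a)⁻¹ ∈ center G) : ⁅(⊤ : Subgroup A), ⊤⁆ ≤ f.eqLocus g := by
  rw [commutator_le]
  intro a _ b _
  have hf : ∀ a, f a = (f a * (g a)⁻¹) * g a := fun a => by group
  change f ⁅a, b⁆ = g ⁅a, b⁆
  rw [map_commutatorElement, map_commutatorElement, hf a, hf b,
    commutatorElement_mul_mul_of_mem_center (h a) (h b)]

lemma inv_mul_mem_commutator_ker_of_comp_eq {A : Type*} [Group A] (π : F →* G) (φ ψ : A →* F)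
    (h : π.comp φ = π.comp ψ) {x : A} (hx : x ∈ ⁅(⊤ : Subgroup A), (⊤ : Subgroup A)⁆) :
    (φ x)⁻¹ * ψ x ∈ ⁅π.ker, (⊤ : Subgroup F)⁆ := by
  let p := QuotientGroup.mk' ⁅π.ker, (⊤ : Subgroup F)⁆
  have hcenter : ∀ a, (p.comp φ) a * ((p.comp ψ) a)⁻¹ ∈ center _ := fun a => by
    have hπ : π (φ a) = π (ψ a) := DFunLike.congr_fun h a
    rw [MonoidHom.comp_apply, MonoidHom.comp_apply, ← map_inv, ← map_mul]
    refine QuotientGroup.mk_mem_center_of_mem ?_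
    rw [MonoidHom.mem_ker, map_mul, map_inv, hπ, mul_inv_cancel]
  exact QuotientGroup.eq.mp (commutator_le_eqLocus_of_mul_inv_mem_center _ _ hcenter hx)

lemma map_commutator_ker_le {F₁ : Type*} [Group F₁] (π : F →* G) (π₁ : F₁ →* G) (φ : F₁ →* F)
    (hφ : π.comp φ = π₁) : ⁅π₁.ker, (⊤ : Subgroup F₁)⁆.map φ ≤ ⁅π.ker, (⊤ : Subgroup F)⁆ := by
  rw [map_commutator]
  refine commutator_mono ?_ le_top
  rw [map_le_iff_le_comap, MonoidHom.comap_ker, hφ]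

lemma commutator_inf_ker_le_of_comp_eq {F₁ : Type*} [Group F₁] (π : F →* G) (π₁ : F₁ →* G)
    (φ : F →* F₁) (ψ : F₁ →* F) (hφ : π₁.comp φ = π) (hψ : π.comp ψ = π₁)
    (h₁ : ⁅(⊤ : Subgroup F₁), ⊤⁆ ⊓ π₁.ker ≤ ⁅π₁.ker, ⊤⁆) :
    ⁅(⊤ : Subgroup F), ⊤⁆ ⊓ π.ker ≤ ⁅π.ker, ⊤⁆ := by
  intro x hx
  obtain ⟨hxc, hxk⟩ := mem_inf.mp hx
  have hφx : φ x ∈ ⁅(⊤ : Subgroup F₁), ⊤⁆ ⊓ π₁.ker := by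
    refine mem_inf.mpr ⟨?_, by rwa [MonoidHom.mem_ker, ← MonoidHom.comp_apply, hφ]⟩
    have := mem_map_of_mem φ hxc
    rw [map_commutator] at this
    exact commutator_mono le_top le_top this
  have hψφx : ψ (φ x) ∈ ⁅π.ker, ⊤⁆ := map_commutator_ker_le π π₁ ψ hψ (mem_map_of_mem ψ (h₁ hφx))
  have hcomp : π.comp (ψ.comp φ) = π.comp (MonoidHom.id F) := by
    rw [← MonoidHom.comp_assoc, hψ, hφ, MonoidHom.comp_id]
  simpa using mul_mem hψφx (inv_mul_mem_commutator_ker_of_comp_eq π _ _ hcomp hxc)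

lemma commutator_inf_ker_le_of_surjective {α β : Type*} (π : FreeGroup α →* G)
    (π₁ : FreeGroup β →* G) (hπ : Function.Surjective π) (hπ₁ : Function.Surjective π₁)
    (h₁ : ⁅(⊤ : Subgroup (FreeGroup β)), ⊤⁆ ⊓ π₁.ker ≤ ⁅π₁.ker, ⊤⁆) :
    ⁅(⊤ : Subgroup (FreeGroup α)), ⊤⁆ ⊓ π.ker ≤ ⁅π.ker, ⊤⁆ :=
  commutator_inf_ker_le_of_comp_eq π π₁
    (FreeGroup.lift (Function.surjInv hπ₁ ∘ π ∘ FreeGroup.of))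
    (FreeGroup.lift (Function.surjInv hπ ∘ π₁ ∘ FreeGroup.of))
    (FreeGroup.ext_hom _ _ fun a => by simp [Function.surjInv_eq])
    (FreeGroup.ext_hom _ _ fun b => by simp [Function.surjInv_eq]) h₁

lemma subsingleton_hopfQuotient {R : Subgroup F} (h : ⁅(⊤ : Subgroup F), ⊤⁆ ⊓ R ≤ ⁅R, ⊤⁆) :
    Subsingleton (hopfQuotient R) := by
  rw [hopfQuotient, subgroupOf_eq_top.mpr h]
  exact QuotientGroup.subsingleton_quotient_top

lemma Subgroup.normal_of_le_center {H : Subgroup G} (h : H ≤ center G) : H.Normal :=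
  ⟨fun n hn g => by rwa [mem_center_iff.mp (h hn) g, mul_inv_cancel_right]⟩

open scoped IsMulCommutative in
theorem commutator_inf_normalClosure_le {ι : Type*} [Fintype ι] (S : ι → F)
    (hS : ∀ a : ι → ℤ, ∏ i, Abelianization.of (S i) ^ a i = 1 → ∀ i, S i ^ a i = 1) :
    ⁅(⊤ : Subgroup F), ⊤⁆ ⊓ normalClosure (Set.range S) ≤ ⁅normalClosure (Set.range S), ⊤⁆ := by
  intro x hx
  obtain ⟨hxc, hxR⟩ := mem_inf.mp hx
  set R := normalClosure (Set.range S)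
  set Q := F ⧸ ⁅R, (⊤ : Subgroup F)⁆
  let c : ι → center Q := fun i => ⟨S i, QuotientGroup.mk_mem_center_of_mem
    (subset_normalClosure (Set.mem_range_self i))⟩
  let C : Subgroup Q := (closure (Set.range c)).map (center Q).subtype
  have : C.Normal := normal_of_le_center (map_subtype_le _)
  have hxC : (x : Q) ∈ C := by
    refine normalClosure_le_normal (N := C.comap (QuotientGroup.mk' _)) ?_ hxR
    rintro _ ⟨i, rfl⟩
    exact mem_map_of_mem _ (subset_closure (Set.mem_range_self i))
  obtain ⟨z, hz, hzx⟩ := hxC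
  obtain ⟨a, rfl⟩ := exists_of_mem_closure_range c z hz
  let ab : Q →* Abelianization F := QuotientGroup.lift _ Abelianization.of (by
    rw [Abelianization.ker_of]; exact commutator_mono le_top le_rfl)
  have hab : ∏ i, Abelianization.of (S i) ^ a i = 1 := by
    calc ∏ i, Abelianization.of (S i) ^ a i = ab ((center Q).subtype (∏ i, c i ^ a i)) := by
          rw [← MonoidHom.comp_apply, map_prod]
          simp only [map_zpow]
          rfl
      _ = 1 := by rw [hzx]; exact (Abelianization.ker_of (G := F)).ge hxc
  have hz1 : ∏ i, c i ^ a i = 1 := Finset.prod_eq_one fun i _ => Subtype.ext <| by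
    rw [OneMemClass.coe_one, SubgroupClass.coe_zpow, ← QuotientGroup.mk_zpow, hS a hab i,
      QuotientGroup.mk_one]
  rw [← QuotientGroup.eq_one_iff, ← hzx, hz1]
  rfl

end

def zmodPowHom {H : Type*} [Group H] {n : ℕ} (q : H) (hq : q ^ n = 1) :
    Multiplicative (ZMod n) →* H :=
  AddMonoidHom.toMultiplicativeLeft
    (ZMod.lift n ⟨zmultiplesHom (Additive H) (Additive.ofMul q), by
      rw [zmultiplesHom_apply, ← ofMul_zpow, zpow_natCast, hq, ofMul_one]⟩)

lemma zmodPowHom_ofAdd_one {H : Type*} [Group H] {n : ℕ} (q : H) (hq : q ^ n = 1) :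
    zmodPowHom q hq (Multiplicative.ofAdd 1) = q := by
  simp only [zmodPowHom, AddMonoidHom.coe_toMultiplicativeLeft, Function.comp_apply, toAdd_ofAdd]
  rw [← Int.cast_one (R := ZMod n), ZMod.lift_coe, zmultiplesHom_apply, one_zsmul]
  rfl

lemma FreeGroup.of_pow_zpow_eq_one_of_abelianization_prod_eq_one {ι : Type*} [Fintype ι]
    (m : ι → ℕ) (a : ι → ℤ)
    (h : ∏ i, Abelianization.of (FreeGroup.of i ^ m i) ^ a i = 1) (i : ι) :
    (FreeGroup.of i ^ m i) ^ a i = 1 := by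
  classical
  let α : FreeGroup ι →* Multiplicative (ι → ℤ) :=
    FreeGroup.lift fun i => Multiplicative.ofAdd (Pi.single i 1)
  have hcoeff : a i = 0 ∨ m i = 0 := by
    have := congrArg (fun y => (Multiplicative.toAdd (Abelianization.lift α y)) i) h
    simpa [map_prod, α, Finset.sum_apply, Pi.single_apply] using this
  rcases hcoeff with h | h <;> simp [h]

namespace FreeProdCyclic

variable {ι : Type*} (m : ι → ℕ)

def proj : FreeGroup ι →* FreeProdCyclic m :=
  FreeGroup.lift (cyclicGen m)

@[simp]
lemma proj_of (i : ι) : proj m (FreeGroup.of i) = cyclicGen m i :=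
  FreeGroup.lift_apply_of

lemma cyclicGen_zpow (i : ι) (k : ℤ) :
    cyclicGen m i ^ k =
      (Monoid.CoprodI.of (Multiplicative.ofAdd (k : ZMod (m i))) : FreeProdCyclic m) := by
  rw [cyclicGen, ← map_zpow, ← ofAdd_zsmul, zsmul_one]

lemma cyclicGen_pow_self (i : ι) : cyclicGen m i ^ m i = 1 := by
  rw [← zpow_natCast, cyclicGen_zpow]
  simp

lemma proj_surjective : Function.Surjective (proj m) := by
  intro x
  induction x using Monoid.CoprodI.induction_on with
  | one => exact ⟨1, map_one _⟩
  | of i y =>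
    refine ⟨FreeGroup.of i ^ (ZMod.cast y.toAdd : ℤ), ?_⟩
    rw [map_zpow, proj_of, cyclicGen_zpow, ZMod.intCast_zmod_cast]
    rfl
  | mul x y hx hy =>
    obtain ⟨a, rfl⟩ := hx
    obtain ⟨b, rfl⟩ := hy
    exact ⟨a * b, map_mul _ _ _⟩

lemma ker_proj : (proj m).ker = normalClosure (Set.range fun i => FreeGroup.of i ^ m i) := by
  set N := normalClosure (Set.range fun i => FreeGroup.of i ^ m i)
  refine le_antisymm (fun x hx => ?_) (normalClosure_le_normal ?_)
  · have hgen : ∀ i, QuotientGroup.mk' N (FreeGroup.of i) ^ m i = 1 := fun i => by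
      rw [← map_pow, QuotientGroup.mk'_apply, QuotientGroup.eq_one_iff]
      exact subset_normalClosure ⟨i, rfl⟩
    let σ : FreeProdCyclic m →* FreeGroup ι ⧸ N :=
      Monoid.CoprodI.lift fun i => zmodPowHom _ (hgen i)
    have hσ : σ.comp (proj m) = QuotientGroup.mk' N :=
      FreeGroup.ext_hom _ _ fun i => by simp [σ, cyclicGen, zmodPowHom_ofAdd_one]
    rw [← QuotientGroup.eq_one_iff, ← QuotientGroup.mk'_apply, ← hσ, MonoidHom.comp_apply,
      MonoidHom.mem_ker.mp hx, map_one]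
  · rintro _ ⟨i, rfl⟩
    rw [SetLike.mem_coe, MonoidHom.mem_ker, map_pow, proj_of, cyclicGen_pow_self]

end FreeProdCyclic

theorem h2_of_free_product_of_cyclic_groups {d : ℕ} (m : Fin d → ℕ) :
    Subsingleton (H2Z (FreeProdCyclic m)) := by
  refine subsingleton_hopfQuotient (commutator_inf_ker_le_of_surjective _ (FreeProdCyclic.proj m)
    (fun g => ⟨FreeGroup.of g, FreeGroup.lift_apply_of⟩) (FreeProdCyclic.proj_surjective m) ?_)
  rw [FreeProdCyclic.ker_proj]
  exact commutator_inf_normalClosure_le _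
    (FreeGroup.of_pow_zpow_eq_one_of_abelianization_prod_eq_one m)
end

section
/- Universality of the unitary cover: let G be a finite group and let Z_u(G) = {α ∈ Z²(G,ℂˣ) : ∏_{j=0}^{o(g)-1} α(g,g^j) = 1 for all g ∈ G} be the group of unitary cocycles. Then Z_u(G) is a finite subgroup of Z²(G,ℂˣ), and, writing Γ_uG = (Z_uG)ˇ ∝ G for the associated Schur construction, for every finite central extension 1 → A → Γ →p→ G → 1 admitting a section σ : G → Γ with o(σ(g)) = o(g) for all g ∈ G and with Γ = ⟨σ(g) : g ∈ G⟩, there exists a surjective group homomorphism φ : Γ_uG → Γ satisfying φ((g, 1)) = σ(g) for all g ∈ G (in particular p∘φ equals the canonical projection of Γ_uG onto G). -/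
/-- The 2-cocycle condition (for the trivial action) on a map `G → G → ℂˣ`. -/
def IsCocycle {G : Type*} [Group G] (α : G → G → ℂˣ) : Prop :=
  ∀ x y z : G, α x y * α (x * y) z = α x (y * z) * α y z

/-- The group `Z²(G,ℂˣ)` of 2-cocycles of `G` with values in `ℂˣ` (trivial action). -/
def Z2 (G : Type*) [Group G] : Subgroup (G → G → ℂˣ) where
  carrier := {α | IsCocycle α}
  one_mem' := by intro x y z; simp
  mul_mem' := by
    intro a b ha hb x y z
    simp only [Pi.mul_apply]
    rw [mul_mul_mul_comm, ha x y z, hb x y z, mul_mul_mul_comm]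
  inv_mem' := by
    intro a ha x y z
    simp only [Pi.inv_apply, ← mul_inv]
    rw [ha x y z]

section
variable {M : Type*} [CommGroup M]
private theorem helper1 (X Y a b c : M) : X * (Y * a * b) * c = (Y * X) * (a * b * c) := by
  simp [mul_comm, mul_left_comm, mul_assoc]
private theorem helper2 (X Z a b c : M) : (X * Z) * (a * b * c) = X * a * (Z * b * c) := by
  simp [mul_comm, mul_left_comm, mul_assoc]
private theorem helper3 (X Y z : M) : X * (X⁻¹ * Y⁻¹ * z⁻¹) * z = Y⁻¹ := by
  simp [mul_comm, mul_left_comm, mul_assoc]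
end

section Schur

variable {G : Type*} [Group G] (S : Subgroup (G → G → ℂˣ))

/-- The evaluation character `ω(g,h) : α ↦ α(g,h)` on a subgroup `S ≤ Z²(G,ℂˣ)`. -/
def omegaChar (g h : G) : S →* ℂˣ where
  toFun α := (α : G → G → ℂˣ) g h
  map_one' := rfl
  map_mul' _ _ := rfl

/-- The underlying type of the Schur construction `Š ∝ G`: pairs `(g, θ)` with `g ∈ G` and
`θ ∈ Š = Hom(S, ℂˣ)`, multiplied by the rule `(g,θ)(h,ψ) = (gh, ω(g,h)θψ)`. -/
def SchurC (hS : ∀ α ∈ S, IsCocycle α) : Type _ := G × (S →* ℂˣ)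

namespace SchurC

variable {S}

/-- Build an element of the Schur construction. -/
def mk (hS : ∀ α ∈ S, IsCocycle α) (g : G) (θ : S →* ℂˣ) : SchurC S hS := (g, θ)

variable {hS : ∀ α ∈ S, IsCocycle α}

/-- First (group) component of an element of the Schur construction. -/
def fst (x : SchurC S hS) : G := x.1

/-- Second (character) component of an element of the Schur construction. -/
def snd (x : SchurC S hS) : S →* ℂˣ := x.2

private theorem omega_cocycle (hS : ∀ α ∈ S, IsCocycle α) (x y z : G) :
    omegaChar S x y * omegaChar S (x * y) z = omegaChar S x (y * z) * omegaChar S y z := by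
  ext α
  exact congrArg Units.val (hS α α.2 x y z)

private theorem omega_one_left (hS : ∀ α ∈ S, IsCocycle α) (h : G) :
    omegaChar S 1 h = omegaChar S 1 1 := by
  ext α
  have := hS α α.2 1 1 h
  simp only [one_mul] at this
  exact congrArg Units.val (mul_right_cancel this.symm)

private theorem omega_one_right (hS : ∀ α ∈ S, IsCocycle α) (g : G) :
    omegaChar S g 1 = omegaChar S 1 1 := by
  ext α
  have := hS α α.2 g 1 1
  simp only [mul_one, one_mul] at this
  exact congrArg Units.val (mul_left_cancel this)

private theorem omega_inv (hS : ∀ α ∈ S, IsCocycle α) (g : G) :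
    omegaChar S g g⁻¹ = omegaChar S g⁻¹ g := by
  ext α
  have := hS α α.2 g g⁻¹ g
  simp only [mul_inv_cancel, inv_mul_cancel] at this
  have h1 : (α : G → G → ℂˣ) 1 g = (α : G → G → ℂˣ) 1 1 :=
    congrArg (fun f : S →* ℂˣ => f α) (omega_one_left hS g)
  have h2 : (α : G → G → ℂˣ) g 1 = (α : G → G → ℂˣ) 1 1 :=
    congrArg (fun f : S →* ℂˣ => f α) (omega_one_right hS g)
  rw [h1, h2] at this
  exact congrArg Units.val (mul_left_cancel ((mul_comm _ _).trans this))

instance : Mul (SchurC S hS) :=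
  ⟨fun x y => (x.1 * y.1, omegaChar S x.1 y.1 * x.2 * y.2)⟩

instance : One (SchurC S hS) := ⟨(1, (omegaChar S 1 1)⁻¹)⟩

instance : Inv (SchurC S hS) :=
  ⟨fun x => (x.1⁻¹, (omegaChar S x.1 x.1⁻¹)⁻¹ * (omegaChar S 1 1)⁻¹ * x.2⁻¹)⟩

instance instGroup : Group (SchurC S hS) :=
  Group.ofLeftAxioms
    (fun a b c => by
      refine Prod.ext (mul_assoc _ _ _) ?_
      show omegaChar S (a.1 * b.1) c.1 * (omegaChar S a.1 b.1 * a.2 * b.2) * c.2 =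
        omegaChar S a.1 (b.1 * c.1) * a.2 * (omegaChar S b.1 c.1 * b.2 * c.2)
      refine MonoidHom.ext fun α => ?_
      simp only [MonoidHom.mul_apply]
      have hα : omegaChar S a.1 b.1 α * omegaChar S (a.1 * b.1) c.1 α =
          omegaChar S a.1 (b.1 * c.1) α * omegaChar S b.1 c.1 α :=
        congrArg (fun f : S →* ℂˣ => f α) (omega_cocycle hS a.1 b.1 c.1)
      calc omegaChar S (a.1 * b.1) c.1 α * (omegaChar S a.1 b.1 α * a.2 α * b.2 α) * c.2 α
          = (omegaChar S a.1 b.1 α * omegaChar S (a.1 * b.1) c.1 α) * (a.2 α * b.2 α * c.2 α) :=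
            helper1 _ _ _ _ _
        _ = (omegaChar S a.1 (b.1 * c.1) α * omegaChar S b.1 c.1 α) * (a.2 α * b.2 α * c.2 α) := by
            rw [hα]
        _ = omegaChar S a.1 (b.1 * c.1) α * a.2 α * (omegaChar S b.1 c.1 α * b.2 α * c.2 α) :=
            helper2 _ _ _ _ _)
    (fun a => by
      refine Prod.ext (one_mul _) ?_
      show omegaChar S 1 a.1 * (omegaChar S 1 1)⁻¹ * a.2 = a.2
      rw [omega_one_left hS]
      refine MonoidHom.ext fun α => ?_
      simp only [MonoidHom.mul_apply, MonoidHom.inv_apply]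
      simp)
    (fun a => by
      refine Prod.ext (inv_mul_cancel _) ?_
      show omegaChar S a.1⁻¹ a.1 * ((omegaChar S a.1 a.1⁻¹)⁻¹ * (omegaChar S 1 1)⁻¹ * a.2⁻¹) * a.2
          = (omegaChar S 1 1)⁻¹
      rw [← omega_inv hS]
      refine MonoidHom.ext fun α => ?_
      simp only [MonoidHom.mul_apply, MonoidHom.inv_apply]
      exact helper3 _ _ _)

end SchurC

end Schur

/-- The group `Z_u(G)` of unitary cocycles: 2-cocycles `α` satisfying additionally
`∏_{j=0}^{o(g)-1} α(g,g^j) = 1` for every `g ∈ G`. -/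
def unitaryZ (G : Type*) [Group G] : Subgroup (G → G → ℂˣ) where
  carrier := {α | IsCocycle α ∧
    ∀ g : G, ∏ j ∈ Finset.range (orderOf g), α g (g ^ j) = 1}
  one_mem' := ⟨by intro x y z; simp, by intro g; simp⟩
  mul_mem' := by
    rintro a b ⟨ha1, ha2⟩ ⟨hb1, hb2⟩
    constructor
    · intro x y z
      simp only [Pi.mul_apply]
      rw [mul_mul_mul_comm, ha1 x y z, hb1 x y z, mul_mul_mul_comm]
    · intro g
      simp only [Pi.mul_apply]
      rw [Finset.prod_mul_distrib, ha2 g, hb2 g, mul_one]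
  inv_mem' := by
    rintro a ⟨ha1, ha2⟩
    constructor
    · intro x y z
      simp only [Pi.inv_apply, ← mul_inv]
      rw [ha1 x y z]
    · intro g
      simp only [Pi.inv_apply]
      rw [Finset.prod_inv_distrib, ha2 g, inv_one]

theorem unitaryZ_isCocycle (G : Type*) [Group G] :
    ∀ α ∈ unitaryZ G, IsCocycle α := fun _ h => h.1

/-!
Every unitary cocycle takes values in the `|G|²`-th roots of unity: multiplying the cocycle
identity over the last variable shows that `α ^ |G|` is the coboundary of
`g ↦ ∏ₓ α(g,x)`, and unitarity forces this cochain to have order dividing `|G|`.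

For the universal property, the factor set `β(g,h) = σ(g)σ(h)σ(gh)⁻¹ ∈ A` of an
order-preserving section is a unitary cocycle with values in `A`, so `χ ∘ β ∈ Z_u(G)` for every
character `χ` of `A`. Dualising `χ ↦ χ ∘ β` and using `A ≅ Â^` gives `f : Ž_u → A` with
`f(ω(g,h)) = β(g,h)`, and then `(g, θ) ↦ f(θ) σ(g)` is a homomorphism `Γ_u G → Γ`; its image
contains `σ(G)`, which generates `Γ`.
-/

open Finset

section CocycleExponent

variable {G M : Type*} [Group G] [Fintype G] [CommGroup M] {α : G → G → M}

lemma cocycle_pow_card_mul_prod (hα : ∀ x y z, α x y * α (x * y) z = α x (y * z) * α y z)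
    (g h : G) :
    α g h ^ Fintype.card G * ∏ x, α (g * h) x = (∏ x, α g x) * ∏ x, α h x := by
  have hprod := prod_congr rfl fun x (_ : x ∈ univ) => hα g h x
  rwa [prod_mul_distrib, prod_mul_distrib, prod_const, card_univ,
    Fintype.prod_equiv (Equiv.mulLeft h) (fun x => α g (h * x)) (α g) fun _ => rfl] at hprod

lemma prod_cocycle_pow_orderOf_eq_one (hα : ∀ x y z, α x y * α (x * y) z = α x (y * z) * α y z)
    {g : G} (hg : ∏ j ∈ range (orderOf g), α g (g ^ j) = 1) :
    (∏ x, α g x) ^ orderOf g = 1 := by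
  set F : ℕ → M := fun j => ∏ x, α (g ^ j) x
  have hstep : ∀ j, α g (g ^ j) ^ Fintype.card G * F (j + 1) = F 1 * F j := fun j => by
    simpa only [F, pow_one, ← pow_succ'] using cocycle_pow_card_mul_prod hα g (g ^ j)
  -- `F` has period `orderOf g`.
  have hshift : ∏ j ∈ range (orderOf g), F (j + 1) = ∏ j ∈ range (orderOf g), F j := by
    have := (prod_range_succ' F (orderOf g)).symm.trans (prod_range_succ F (orderOf g))
    simpa only [F, pow_zero, pow_orderOf_eq_one, mul_left_inj] using this
  have hprod := prod_congr rfl fun j (_ : j ∈ range (orderOf g)) => hstep j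
  rw [prod_mul_distrib, prod_mul_distrib, prod_pow, hg, one_pow, one_mul, hshift, prod_const,
    card_range, right_eq_mul] at hprod
  simpa only [F, pow_one] using hprod

lemma cocycle_pow_card_mul_card_eq_one
    (hα : ∀ x y z, α x y * α (x * y) z = α x (y * z) * α y z)
    (hu : ∀ g, ∏ j ∈ range (orderOf g), α g (g ^ j) = 1) (g h : G) :
    α g h ^ (Fintype.card G * Fintype.card G) = 1 := by
  have hf : ∀ x, (∏ y, α x y) ^ Fintype.card G = 1 := fun x =>
    orderOf_dvd_iff_pow_eq_one.mp <| (orderOf_dvd_of_pow_eq_one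
      (prod_cocycle_pow_orderOf_eq_one hα (hu x))).trans orderOf_dvd_card
  have := congrArg (· ^ Fintype.card G) (cocycle_pow_card_mul_prod hα g h)
  simpa only [mul_pow, ← pow_mul, hf, mul_one] using this

end CocycleExponent

theorem unitaryZ_finite (G : Type*) [Group G] [Finite G] : Finite (unitaryZ G) := by
  have := Fintype.ofFinite G
  let n := Fintype.card G * Fintype.card G
  let F : unitaryZ G → G → G → rootsOfUnity n ℂ := fun α g h =>
    ⟨(α : G → G → ℂˣ) g h, (mem_rootsOfUnity n _).mpr
      (cocycle_pow_card_mul_card_eq_one α.2.1 α.2.2 g h)⟩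
  refine Finite.of_injective F fun a b hab => Subtype.ext (funext₂ fun g h => ?_)
  exact congrArg Subtype.val (congrFun₂ hab g h)

section FactorSet

open scoped IsMulCommutative

variable {Γ G : Type*} [Group Γ] [Group G] {p : Γ →* G} {σ : G → Γ}

lemma isMulCommutative_of_le_center {H : Subgroup Γ} (hH : H ≤ Subgroup.center Γ) :
    IsMulCommutative H :=
  Subgroup.le_centralizer_iff_isMulCommutative.mp (hH.trans (Subgroup.center_le_centralizer _))

variable (p σ) in
def factorSet (hσ : ∀ g, p (σ g) = g) (g h : G) : p.ker :=
  ⟨σ g * σ h * (σ (g * h))⁻¹, by simp [hσ]⟩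

variable {hσ : ∀ g, p (σ g) = g}

lemma section_mul_section (g h : G) : σ g * σ h = factorSet p σ hσ g h * σ (g * h) := by
  simp [factorSet]

lemma mul_comm_of_mem_ker (hc : p.ker ≤ Subgroup.center Γ) (a : p.ker) (x : Γ) :
    x * a = a * x :=
  Subgroup.mem_center_iff.mp (hc a.2) x

variable [IsMulCommutative p.ker]

lemma factorSet_cocycle (hc : p.ker ≤ Subgroup.center Γ) (x y z : G) :
    factorSet p σ hσ x y * factorSet p σ hσ (x * y) z =
      factorSet p σ hσ x (y * z) * factorSet p σ hσ y z := by
  set β := factorSet p σ hσ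
  apply Subtype.val_injective
  apply mul_right_cancel (b := σ (x * y * z))
  calc ((β x y * β (x * y) z : p.ker) : Γ) * σ (x * y * z)
      = β x y * (β (x * y) z * σ (x * y * z)) := by rw [Subgroup.coe_mul, mul_assoc]
    _ = σ x * σ y * σ z := by rw [← section_mul_section, ← mul_assoc, ← section_mul_section]
    _ = β y z * (σ x * σ (y * z)) := by
        rw [mul_assoc, section_mul_section y z, ← mul_assoc, mul_comm_of_mem_ker hc, mul_assoc]
    _ = ((β x (y * z) * β y z : p.ker) : Γ) * σ (x * y * z) := by
        rw [section_mul_section, mul_comm (β x _), Subgroup.coe_mul, mul_assoc, mul_assoc]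

lemma section_pow (hc : p.ker ≤ Subgroup.center Γ) (hσ1 : σ 1 = 1) (g : G) (m : ℕ) :
    σ g ^ m = ((∏ j ∈ range m, factorSet p σ hσ g (g ^ j) : p.ker) : Γ) * σ (g ^ m) := by
  induction m with
  | zero => simp [hσ1]
  | succ m ih =>
    rw [pow_succ', ih, ← mul_assoc, mul_comm_of_mem_ker hc, mul_assoc,
      section_mul_section (hσ := hσ), ← pow_succ', ← mul_assoc, ← Subgroup.coe_mul,
      prod_range_succ, mul_comm]

lemma prod_factorSet_range_orderOf_eq_one (hc : p.ker ≤ Subgroup.center Γ)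
    (hord : ∀ g, orderOf (σ g) = orderOf g) (g : G) :
    ∏ j ∈ range (orderOf g), factorSet p σ hσ g (g ^ j) = 1 := by
  have hσ1 : σ 1 = 1 := orderOf_eq_one_iff.mp ((hord 1).trans orderOf_one)
  have := section_pow (hσ := hσ) hc hσ1 g (orderOf g)
  rw [← hord, pow_orderOf_eq_one, hord, pow_orderOf_eq_one, hσ1, mul_one] at this
  exact Subtype.val_injective this.symm

lemma comp_factorSet_mem_unitaryZ (hc : p.ker ≤ Subgroup.center Γ)
    (hord : ∀ g, orderOf (σ g) = orderOf g) (χ : p.ker →* ℂˣ) :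
    (fun g h => χ (factorSet p σ hσ g h)) ∈ unitaryZ G := by
  refine ⟨fun x y z => ?_, fun g => ?_⟩
  · simp only [← map_mul, factorSet_cocycle hc]
  · rw [← map_prod, prod_factorSet_range_orderOf_eq_one hc hord, map_one]

end FactorSet

section Duality

variable {G A : Type*} [CommGroup A] [Finite A] {S : Subgroup (G → G → ℂˣ)} {β : G → G → A}

/-- Dual to `χ ↦ χ ∘ β` from `Â` to `S`, read through the double duality `A ≅ Â^`. -/
noncomputable def dualOfFactorSet (hβ : ∀ χ : A →* ℂˣ, (fun g h => χ (β g h)) ∈ S) :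
    (S →* ℂˣ) →* A :=
  (CommGroup.monoidHomMonoidHomEquiv A ℂ).toMonoidHom.comp <| MonoidHom.compHom'
    { toFun := fun χ => ⟨fun g h => χ (β g h), hβ χ⟩
      map_one' := rfl
      map_mul' := fun _ _ => rfl }

lemma dualOfFactorSet_omegaChar (hβ : ∀ χ : A →* ℂˣ, (fun g h => χ (β g h)) ∈ S) (g h : G) :
    dualOfFactorSet hβ (omegaChar S g h) = β g h :=
  (CommGroup.forall_apply_eq_apply_iff A (M := ℂ)).mp fun χ =>
    CommGroup.apply_monoidHomMonoidHomEquiv ℂ χ _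

end Duality

namespace SchurC

open scoped IsMulCommutative

variable {Γ G : Type*} [Group Γ] [Group G] {p : Γ →* G} [IsMulCommutative p.ker] {σ : G → Γ}
  {hσ : ∀ g, p (σ g) = g} {S : Subgroup (G → G → ℂˣ)} (hS : ∀ α ∈ S, IsCocycle α)
  {f : (S →* ℂˣ) →* p.ker}

lemma fst_mul (x y : SchurC S hS) : (x * y).fst = x.fst * y.fst := rfl

lemma snd_mul (x y : SchurC S hS) :
    (x * y).snd = omegaChar S x.fst y.fst * x.snd * y.snd := rfl

def lift (hc : p.ker ≤ Subgroup.center Γ)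
    (hf : ∀ g h, f (omegaChar S g h) = factorSet p σ hσ g h) : SchurC S hS →* Γ :=
  MonoidHom.mk' (fun x => f x.snd * σ x.fst) fun x y => calc
    (f (x * y).snd : Γ) * σ (x * y).fst
        = (f x.snd * f y.snd : p.ker) * (factorSet p σ hσ x.fst y.fst * σ (x.fst * y.fst)) := by
          rw [snd_mul, fst_mul, map_mul, map_mul, hf, mul_rotate, Subgroup.coe_mul, mul_assoc]
      _ = f x.snd * (f y.snd * (σ x.fst * σ y.fst)) := by
          rw [← section_mul_section, Subgroup.coe_mul, mul_assoc]
      _ = f x.snd * σ x.fst * (f y.snd * σ y.fst) := by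
          rw [← mul_assoc (f y.snd : Γ), ← mul_comm_of_mem_ker hc (f y.snd)]
          simp only [mul_assoc]

variable (hc : p.ker ≤ Subgroup.center Γ)
  (hf : ∀ g h, f (omegaChar S g h) = factorSet p σ hσ g h)

lemma lift_mk_one (g : G) : lift hS hc hf (mk hS g 1) = σ g := by
  simp [lift, mk, snd, fst]

lemma map_lift (x : SchurC S hS) : p (lift hS hc hf x) = x.fst := by
  simp [lift, hσ, MonoidHom.mem_ker.mp (f x.snd).2]

lemma lift_surjective (hgen : Subgroup.closure (Set.range σ) = ⊤) :
    Function.Surjective (lift hS hc hf) := by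
  rw [← MonoidHom.range_eq_top, eq_top_iff, ← hgen, Subgroup.closure_le]
  rintro _ ⟨g, rfl⟩
  exact ⟨mk hS g 1, lift_mk_one hS hc hf g⟩

end SchurC

theorem unitary_cover_universal (G : Type*) [Group G] [Finite G] :
    Finite (unitaryZ G) ∧
    ∀ (Γ : Type*) [Group Γ] [Finite Γ] (p : Γ →* G),
      Function.Surjective p →
      p.ker ≤ Subgroup.center Γ →
      ∀ σ : G → Γ, (∀ g : G, p (σ g) = g) →
        (∀ g : G, orderOf (σ g) = orderOf g) →
        Subgroup.closure (Set.range σ) = ⊤ →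
        ∃ φ : SchurC (unitaryZ G) (unitaryZ_isCocycle G) →* Γ,
          Function.Surjective φ ∧
          (∀ g : G, φ (SchurC.mk (unitaryZ_isCocycle G) g 1) = σ g) ∧
          (∀ x : SchurC (unitaryZ G) (unitaryZ_isCocycle G),
            p (φ x) = SchurC.fst x) := by
  refine ⟨unitaryZ_finite G, fun Γ _ _ p _ hc σ hσ hord hgen => ?_⟩
  have := isMulCommutative_of_le_center hc
  open scoped IsMulCommutative in
  have hf := dualOfFactorSet_omegaChar (comp_factorSet_mem_unitaryZ (hσ := hσ) hc hord)
  exact ⟨SchurC.lift _ hc hf, SchurC.lift_surjective _ hc hf hgen, SchurC.lift_mk_one _ hc hf,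
    SchurC.map_lift _ hc hf⟩
end
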